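/- arXiv:2404.14707 — 2 statements merged into one kernel-verified Lean document; each statement's English description precedes it below -/
import Mathlib

section
/- Let a > 0 be irrational and define Γ^a_k as the minimizer of max(i, a·j) over pairs (i,j) ∈ ℤ_{≥0}² with i + j = k. Then the sequence Γ^a_0, Γ^a_1, Γ^a_2, ... is a unit-step lattice path: for each k ≥ 0, Γ^a_{k+1} − Γ^a_k equals either (1,0) or (0,1). -/
/-- `p` is a minimizer of `max(i, a·j)` among pairs `(i,j) ∈ ℤ_{≥0}²` with `i + j = k`. -/
def IsMinPath (a : ℝ) (k : ℕ) (p : ℕ × ℕ) : Prop :=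
  p.1 + p.2 = k ∧
    ∀ q : ℕ × ℕ, q.1 + q.2 = k → max (p.1 : ℝ) (a * p.2) ≤ max (q.1 : ℝ) (a * q.2)

/-- For irrational `a > 0`, consecutive minimizers `Γ^a_k` and `Γ^a_{k+1}` differ by
a unit step `(1,0)` or `(0,1)`. -/
theorem stmt_4 (a : ℝ) (ha : 0 < a) (hirr : Irrational a) (k : ℕ) (p q : ℕ × ℕ)
    (hp : IsMinPath a k p) (hq : IsMinPath a (k + 1) q) :
    (q.1 = p.1 + 1 ∧ q.2 = p.2) ∨ (q.1 = p.1 ∧ q.2 = p.2 + 1) := by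
  obtain ⟨hpk, hpmin⟩ := hp
  obtain ⟨hqk, hqmin⟩ := hq
  have h1 : q.1 ≤ p.1 + 1 := by
    by_contra h
    push_neg at h
    have hq1 : p.1 + 2 ≤ q.1 := h
    have hq2 : q.2 + 1 ≤ p.2 := by omega
    have hA := hqmin (p.1 + 1, p.2) (by simp; omega)
    have hB := hpmin (q.1 - 1, q.2) (by simp; omega)
    simp only at hA hB
    have hc1 : ((q.1 - 1 : ℕ) : ℝ) = (q.1 : ℝ) - 1 := by
      have : 1 ≤ q.1 := by omega
      push_cast [this]; ring
    rw [hc1] at hB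
    push_cast at hA
    have hr1 : (p.1 : ℝ) + 2 ≤ (q.1 : ℝ) := by exact_mod_cast hq1
    have hr2 : (q.2 : ℝ) + 1 ≤ (p.2 : ℝ) := by exact_mod_cast hq2
    -- from hA : q.1 ≤ a * p.2
    have hx : (q.1 : ℝ) ≤ max ((p.1 : ℝ) + 1) (a * p.2) :=
      le_trans (le_max_left _ _) hA
    rcases le_max_iff.mp hx with h' | h'
    · linarith
    · -- a * p.2 ≤ max (q.1 - 1) (a * q.2)
      have hy : a * p.2 ≤ max ((q.1 : ℝ) - 1) (a * q.2) :=
        le_trans (le_max_right _ _) hB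
      have haq : a * q.2 < a * p.2 := by nlinarith
      rcases le_max_iff.mp hy with h'' | h'' <;> linarith
  have h2 : p.1 ≤ q.1 := by
    by_contra h
    push_neg at h
    have hq1 : q.1 + 1 ≤ p.1 := h
    have hq2 : p.2 + 2 ≤ q.2 := by omega
    have hA := hqmin (p.1, p.2 + 1) (by simp; omega)
    have hB := hpmin (q.1, q.2 - 1) (by simp; omega)
    simp only at hA hB
    have hc1 : ((q.2 - 1 : ℕ) : ℝ) = (q.2 : ℝ) - 1 := by
      have : 1 ≤ q.2 := by omega
      push_cast [this]; ring
    rw [hc1] at hB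
    push_cast at hA
    have hr1 : (q.1 : ℝ) + 1 ≤ (p.1 : ℝ) := by exact_mod_cast hq1
    have hr2 : (p.2 : ℝ) + 2 ≤ (q.2 : ℝ) := by exact_mod_cast hq2
    have hx : a * q.2 ≤ max (p.1 : ℝ) (a * ((p.2 : ℝ) + 1)) :=
      le_trans (le_max_right _ _) hA
    have haq : a * ((p.2 : ℝ) + 1) < a * q.2 := by nlinarith
    rcases le_max_iff.mp hx with h' | h'
    · -- a * q.2 ≤ p.1
      have hy : (p.1 : ℝ) ≤ max (q.1 : ℝ) (a * ((q.2 : ℝ) - 1)) :=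
        le_trans (le_max_left _ _) hB
      rcases le_max_iff.mp hy with h'' | h'' <;> nlinarith
    · linarith
  omega
end

section
/- Let V, W be evenly graded L∞ algebras over ℚ (all operations zero) and Φ : V → W, Ψ : W → V be L∞ homomorphisms. If Ψ ∘ Φ = id_V and Φ^1 is surjective, then Φ ∘ Ψ = id_W. -/
open scoped Classical

/-- A family of `k`-ary maps `V^k → W` for `k ≥ 0` (the `k = 0` component is
required to vanish for an `L∞` homomorphism). -/
abbrev Fam (V W : Type*) := ∀ k : ℕ, (Fin k → V) → W

/-- `Φ` is an `L∞` homomorphism between evenly graded `L∞` algebras over `ℚ`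
(all operations zero): a collection of symmetric multilinear maps
`Φ^k : ⊙^k V → W` for `k ≥ 1`. -/
structure IsLinfHom {V W : Type*} [AddCommGroup V] [Module ℚ V]
    [AddCommGroup W] [Module ℚ W] (Φ : Fam V W) : Prop where
  zero : ∀ v, Φ 0 v = 0
  multilinear : ∀ k : ℕ, ∃ F : MultilinearMap ℚ (fun _ : Fin k => V) W,
    ∀ v, F v = Φ k v
  symm : ∀ (k : ℕ) (σ : Equiv.Perm (Fin k)) (v : Fin k → V), Φ k (v ∘ σ) = Φ k v

/-- Composition of `L∞` homomorphisms, via the induced coalgebra maps on the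
reduced symmetric coalgebra: `(Ψ ∘ Φ)^k(v) = Σ_s (1/s!) Σ_{h : {1..k} ↠ {1..s}}
Ψ^s(Φ^{|h⁻¹1|}(v|_{h⁻¹1}), …)`, the sum over surjections with `1/s!` being
equivalent to the sum over unordered partitions into `s` blocks. -/
noncomputable def Fam.comp {V W U : Type*} [AddCommGroup V] [Module ℚ V]
    [AddCommGroup W] [Module ℚ W] [AddCommGroup U] [Module ℚ U]
    (Ψ : Fam W U) (Φ : Fam V W) : Fam V U := fun k v =>
  ∑ s ∈ Finset.Icc 1 k, (Nat.factorial s : ℚ)⁻¹ •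
    ∑ h ∈ Finset.univ.filter fun h : Fin k → Fin s => Function.Surjective h,
      Ψ s fun i =>
        Φ (Finset.univ.filter fun j : Fin k => h j = i).card fun t =>
          v ((Finset.univ.filter fun j : Fin k => h j = i).orderIsoOfFin rfl t).1

/-- The identity `L∞` homomorphism: `𝟙^1 = id`, `𝟙^k = 0` for `k ≠ 1`. -/
def idFam (V : Type*) [AddCommGroup V] : Fam V V := fun k =>
  match k with
  | 1 => fun v => v 0
  | _ => fun _ => 0


namespace StmtAux
open Finset Function
def fib {k s : ℕ} (h : Fin k → Fin s) (i : Fin s) : Finset (Fin k) :=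
  Finset.univ.filter fun j => h j = i

noncomputable def res {V : Type*} {k : ℕ} (v : Fin k → V) (S : Finset (Fin k)) :
    Fin S.card → V :=
  fun t => v ((S.orderIsoOfFin rfl) t).1

lemma mem_fib {k s : ℕ} {h : Fin k → Fin s} {i : Fin s} {j : Fin k} :
    j ∈ fib h i ↔ h j = i := by simp [fib]

def Surj (a b : ℕ) : Finset (Fin a → Fin b) :=
  Finset.univ.filter fun h : Fin a → Fin b => Function.Surjective h

lemma mem_Surj {a b : ℕ} {h : Fin a → Fin b} : h ∈ Surj a b ↔ Surjective h := by
  simp [Surj]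

lemma card_fib_subtype {M t : ℕ} (p : Fin M → Fin t) (i : Fin t) :
    #(fib p i) = Fintype.card {j // p j = i} := (Fintype.card_subtype _).symm

/-- cardinality of the set of functions with prescribed fiber cardinalities -/
lemma cnt (t M : ℕ) (s : Fin t → ℕ) (hs : ∑ i, s i = M) :
    #(univ.filter fun p : Fin M → Fin t => ∀ i, #(fib p i) = s i) * ∏ i, Nat.factorial (s i) = Nat.factorial M := by
  have hcard : Fintype.card (Σ i : Fin t, Fin (s i)) = Fintype.card (Fin M) := by
    simp [hs]
  let σ : (Σ i : Fin t, Fin (s i)) ≃ Fin M := Fintype.equivOfCardEq hcard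
  let π : Fin M → Fin t := fun j => (σ.symm j).1
  have hfib : ∀ (q : Fin M → Fin t) (i : Fin t) (e : {j // q j = i} ≃ Fin (s i)),
      #(fib q i) = s i := by
    intro q i e
    rw [card_fib_subtype, Fintype.card_congr e, Fintype.card_fin]
  have eπ : ∀ i : Fin t, {j // π j = i} ≃ Fin (s i) := by
    intro i
    refine (Equiv.subtypeEquiv (p := fun j => π j = i) (q := fun x => x.1 = i)
      σ.symm (fun j => Iff.rfl)).trans ?_
    exact
      { toFun := fun x => Fin.cast (by rw [x.2]) x.1.2
        invFun := fun y => ⟨⟨i, y⟩, rfl⟩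
        left_inv := by rintro ⟨⟨i', y⟩, rfl⟩; rfl
        right_inv := by intro y; rfl }
  have hπ : ∀ i, #(fib π i) = s i := fun i => hfib π i (eπ i)
  -- fiberwise count over the map ρ ↦ π ∘ ρ
  have hmaps : ∀ ρ : Equiv.Perm (Fin M), ∀ i, #(fib (π ∘ ρ) i) = s i := by
    intro ρ i
    refine hfib _ i ((Equiv.subtypeEquiv ρ (fun j => Iff.rfl)).trans (eπ i))
  have hM : Nat.factorial M = ∑ p ∈ univ.filter (fun p : Fin M → Fin t => ∀ i, #(fib p i) = s i),
      #(univ.filter fun ρ : Equiv.Perm (Fin M) => π ∘ ρ = p) := by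
    have h1 : Nat.factorial M = Fintype.card (Equiv.Perm (Fin M)) := by
      simp [Fintype.card_perm]
    rw [h1, ← Finset.card_univ,
      Finset.card_eq_sum_card_fiberwise
        (f := fun ρ : Equiv.Perm (Fin M) => π ∘ ρ)
        (t := univ.filter fun p : Fin M → Fin t => ∀ i, #(fib p i) = s i)
        (fun ρ _ => mem_filter.2 ⟨mem_univ _, hmaps ρ⟩)]
  have key : ∀ p ∈ univ.filter (fun p : Fin M → Fin t => ∀ i, #(fib p i) = s i),
      #(univ.filter fun ρ : Equiv.Perm (Fin M) => π ∘ ρ = p) = ∏ i, Nat.factorial (s i) := by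
    intro p hp
    have hp' : ∀ i, #(fib p i) = s i := (mem_filter.1 hp).2
    have E : {ρ : Equiv.Perm (Fin M) // π ∘ ρ = p} ≃
        Π i : Fin t, ({j // p j = i} ≃ {j // π j = i}) := by
      refine
        { toFun := fun ρh i => Equiv.subtypeEquiv ρh.1
            (fun j => by rw [← congrFun ρh.2 j]; exact Iff.rfl)
          invFun := fun F => ⟨(Equiv.sigmaFiberEquiv p).symm.trans
            ((Equiv.sigmaCongrRight F).trans (Equiv.sigmaFiberEquiv π)), ?_⟩
          left_inv := ?_
          right_inv := ?_ }
      · funext j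
        exact (F (p j) ⟨j, rfl⟩).2
      · rintro ⟨ρ, hρ⟩
        ext j
        simp [Equiv.sigmaFiberEquiv, Equiv.sigmaCongrRight, Equiv.subtypeEquiv]
      · intro F
        funext i
        ext ⟨j, hj⟩
        subst hj
        simp [Equiv.sigmaFiberEquiv, Equiv.sigmaCongrRight, Equiv.subtypeEquiv]
    have h2 : #(univ.filter fun ρ : Equiv.Perm (Fin M) => π ∘ ρ = p)
        = Fintype.card {ρ : Equiv.Perm (Fin M) // π ∘ ρ = p} :=
      (Fintype.card_subtype _).symm
    rw [h2, Fintype.card_congr E, Fintype.card_pi]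
    refine Finset.prod_congr rfl fun i _ => ?_
    have c1 : Fintype.card {j // p j = i} = s i := by
      rw [← hp' i, card_fib_subtype]
    have c2 : Fintype.card {j // π j = i} = s i := by
      rw [← hπ i, card_fib_subtype]
    have e0 : {j // p j = i} ≃ {j // π j = i} :=
      Fintype.equivOfCardEq (by rw [c1, c2])
    rw [Fintype.card_equiv e0, c1]
  rw [hM, Finset.sum_congr rfl key, Finset.sum_const, smul_eq_mul]

lemma comp_def {V W U : Type*} [AddCommGroup V] [Module ℚ V]
    [AddCommGroup W] [Module ℚ W] [AddCommGroup U] [Module ℚ U]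
    (Ψ : Fam W U) (Φ : Fam V W) (k : ℕ) (v : Fin k → V) :
    Fam.comp Ψ Φ k v =
      ∑ s ∈ Finset.Icc 1 k, (Nat.factorial s : ℚ)⁻¹ •
        ∑ h ∈ Surj k s, Ψ s fun i => Φ (fib h i).card (res v (fib h i)) := rfl

variable {V W U Z : Type*} [AddCommGroup V] [Module ℚ V] [AddCommGroup W] [Module ℚ W]
  [AddCommGroup U] [Module ℚ U] [AddCommGroup Z] [Module ℚ Z]

/-- the function induced between fibers -/
def hmap {k m t : ℕ} (H : Fin k → Fin m) (p : Fin m → Fin t) (i : Fin t)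
    (x : Fin #(fib (p ∘ H) i)) : Fin #(fib p i) :=
  ((fib p i).orderIsoOfFin rfl).symm ⟨H (((fib (p ∘ H) i).orderIsoOfFin rfl x).1), by
    have h2 := (((fib (p ∘ H) i).orderIsoOfFin rfl x)).2
    rw [mem_fib] at h2 ⊢
    exact h2⟩

def chi {k t : ℕ} (d : Σ m : ℕ, (Fin k → Fin m) × (Fin m → Fin t)) :
    Σ g : Fin k → Fin t, ∀ i : Fin t, Σ s : ℕ, (Fin #(fib g i) → Fin s) :=
  ⟨d.2.2 ∘ d.2.1, fun i => ⟨#(fib d.2.2 i), hmap d.2.1 d.2.2 i⟩⟩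

lemma fib_comp_image {k m t : ℕ} (H : Fin k → Fin m) (p : Fin m → Fin t)
    (i : Fin t) (j : Fin #(fib p i)) :
    fib H (((fib p i).orderIsoOfFin rfl j).1)
      = (fib (hmap H p i) j).image (fun x => ((fib (p ∘ H) i).orderIsoOfFin rfl x).1) := by
  ext x'
  simp only [mem_fib, Finset.mem_image]
  constructor
  · intro hx
    have hmem : x' ∈ fib (p ∘ H) i := by
      rw [mem_fib]
      show p (H x') = i
      rw [hx]
      exact (mem_fib.1 ((fib p i).orderIsoOfFin rfl j).2)
    refine ⟨((fib (p ∘ H) i).orderIsoOfFin rfl).symm ⟨x', hmem⟩, ?_, by simp⟩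
    unfold hmap
    apply ((fib p i).orderIsoOfFin rfl).symm_apply_eq.2
    apply Subtype.ext
    simp [hx]
  · rintro ⟨x, hx, rfl⟩
    unfold hmap at hx
    have := congrArg (fun z => (((fib p i).orderIsoOfFin rfl) z).1) hx
    simpa using this
lemma fam_congr {V W : Type*} [AddCommGroup V] [Module ℚ V] [AddCommGroup W] [Module ℚ W]
    (C : Fam V W) {c₁ c₂ : ℕ} (hc : c₁ = c₂) {f₁ : Fin c₁ → V} {f₂ : Fin c₂ → V}
    (hf : ∀ x : Fin c₁, f₁ x = f₂ (Fin.cast hc x)) : C c₁ f₁ = C c₂ f₂ := by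
  subst hc
  congr 1
  funext x
  simpa using hf x

lemma orderIso_image {k : ℕ} (S : Finset (Fin k)) (T : Finset (Fin S.card))
    (hc : (T.image fun x => ((S.orderIsoOfFin rfl) x).1).card = T.card)
    (t : Fin (T.image fun x => ((S.orderIsoOfFin rfl) x).1).card) :
    (((T.image fun x => ((S.orderIsoOfFin rfl) x).1).orderIsoOfFin rfl) t).1
      = ((S.orderIsoOfFin rfl) ((T.orderIsoOfFin rfl) (Fin.cast hc t))).1 := by
  have hmono : StrictMono (fun y : Fin T.card =>
      ((S.orderIsoOfFin rfl) ((T.orderIsoOfFin rfl) y)).1) := by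
    intro a b hab
    exact (S.orderEmbOfFin rfl).strictMono ((T.orderEmbOfFin rfl).strictMono hab)
  have h1 : (fun y : Fin (T.image fun x => ((S.orderIsoOfFin rfl) x).1).card =>
      ((S.orderIsoOfFin rfl) ((T.orderIsoOfFin rfl) (Fin.cast hc y))).1) =
      ⇑((T.image fun x => ((S.orderIsoOfFin rfl) x).1).orderEmbOfFin rfl) := by
    apply Finset.orderEmbOfFin_unique
    · intro x
      exact mem_image_of_mem _ (Finset.coe_mem _)
    · intro a b hab
      exact hmono (by exact hab)
  have := congrFun h1 t
  rw [← Finset.coe_orderIsoOfFin_apply] at this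
  exact this.symm

lemma card_image_orderIso {k : ℕ} (S : Finset (Fin k)) (T : Finset (Fin S.card)) :
    (T.image fun x => ((S.orderIsoOfFin rfl) x).1).card = T.card :=
  Finset.card_image_of_injective _ (fun a b hab => by
    have := (S.orderIsoOfFin rfl).injective (Subtype.ext hab); exact this)

lemma res_image {V : Type*} {k : ℕ} (v : Fin k → V) (S : Finset (Fin k))
    (T : Finset (Fin S.card)) (t : Fin (T.image fun x => ((S.orderIsoOfFin rfl) x).1).card) :
    res v (T.image fun x => ((S.orderIsoOfFin rfl) x).1) t
      = res (res v S) T (Fin.cast (card_image_orderIso S T) t) := by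
  unfold res
  rw [orderIso_image _ _ (card_image_orderIso S T)]

noncomputable def wv (C : Fam V W) {k m : ℕ} (v : Fin k → V) (H : Fin k → Fin m) :
    Fin m → W :=
  fun j => C #(fib H j) (res v (fib H j))

noncomputable def Th (B : Fam W U) (C : Fam V W) {k t : ℕ} (v : Fin k → V)
    (d : Σ m : ℕ, (Fin k → Fin m) × (Fin m → Fin t)) : Fin t → U :=
  fun i => B #(fib d.2.2 i) (res (wv C v d.2.1) (fib d.2.2 i))

noncomputable def La (B : Fam W U) (C : Fam V W) {k t : ℕ} (v : Fin k → V)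
    (g : Fin k → Fin t) (r : ∀ i : Fin t, Σ s : ℕ, (Fin #(fib g i) → Fin s)) : Fin t → U :=
  fun i => B (r i).1 fun y => C #(fib (r i).2 y) (res (res v (fib g i)) (fib (r i).2 y))

lemma Th_eq_La (B : Fam W U) (C : Fam V W) {k t : ℕ} (v : Fin k → V)
    (d : Σ m : ℕ, (Fin k → Fin m) × (Fin m → Fin t)) :
    Th B C v d = La B C v (chi d).1 (chi d).2 := by
  obtain ⟨m, H, p⟩ := d
  funext i
  show B _ _ = B _ _
  congr 1
  funext j
  show wv C v H (((fib p i).orderIsoOfFin rfl j).1) = _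
  unfold wv
  rw [fib_comp_image H p i j]
  exact fam_congr C (card_image_orderIso _ _) (fun x => res_image v _ _ x)

lemma mSum {m t : ℕ} (p : Fin m → Fin t) : m = ∑ i, #(fib p i) := by
  have := Finset.card_eq_sum_card_fiberwise
    (f := p) (s := univ) (t := univ) (fun x _ => mem_univ _)
  simpa [fib] using this

def Dt (k t : ℕ) : Finset (Σ m : ℕ, (Fin k → Fin m) × (Fin m → Fin t)) :=
  (Icc 1 k).sigma fun m => (Surj k m) ×ˢ (Surj m t)

def Et (k t : ℕ) : Finset (Σ g : Fin k → Fin t, ∀ i : Fin t, Σ s : ℕ,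
    (Fin #(fib g i) → Fin s)) :=
  (Surj k t).sigma fun g =>
    Fintype.piFinset fun i => (Icc 1 #(fib g i)).sigma fun s => Surj #(fib g i) s

lemma hmap_surj {k m t : ℕ} {H : Fin k → Fin m} (hH : Surjective H)
    (p : Fin m → Fin t) (i : Fin t) : Surjective (hmap H p i) := by
  intro y
  obtain ⟨x', hx'⟩ := hH (((fib p i).orderIsoOfFin rfl) y).1
  have hx'mem : x' ∈ fib (p ∘ H) i := by
    rw [mem_fib]
    show p (H x') = i
    rw [hx']
    exact mem_fib.1 (Finset.coe_mem _)
  refine ⟨((fib (p ∘ H) i).orderIsoOfFin rfl).symm ⟨x', hx'mem⟩, ?_⟩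
  unfold hmap
  apply ((fib p i).orderIsoOfFin rfl).symm_apply_eq.2
  apply Subtype.ext
  simp [hx']

lemma chi_maps_to {k t : ℕ} (d : Σ m : ℕ, (Fin k → Fin m) × (Fin m → Fin t))
    (hd : d ∈ Dt k t) : chi d ∈ Et k t := by
  obtain ⟨m, H, p⟩ := d
  rw [Dt, Finset.mem_sigma, Finset.mem_product] at hd
  obtain ⟨hm, hH, hp⟩ := hd
  rw [mem_Surj] at hH hp
  dsimp only at hm hH hp
  rw [Et, Finset.mem_sigma]
  constructor
  · exact mem_Surj.2 (hp.comp hH)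
  · rw [Fintype.mem_piFinset]
    intro i
    rw [Finset.mem_sigma]
    dsimp only [chi]
    constructor
    · rw [Finset.mem_Icc]
      constructor
      · show 1 ≤ #(fib p i)
        rw [Nat.succ_le_iff, Finset.card_pos]
        obtain ⟨j, hj⟩ := hp i
        exact ⟨j, mem_fib.2 hj⟩
      · apply Finset.card_le_card_of_surjOn H
        intro y hy
        obtain ⟨x, hx⟩ := hH y
        simp only [Finset.coe_filter, Set.mem_image, fib] at hy ⊢
        refine ⟨x, ?_, hx⟩
        simp only [Set.mem_setOf_eq, mem_univ, true_and]
        show p (H x) = i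
        rw [show H x = y from hx]
        simpa [fib] using hy
    · exact mem_Surj.2 (hmap_surj hH p i)

lemma iota_hmap {k m t : ℕ} (H : Fin k → Fin m) (p : Fin m → Fin t) (i : Fin t)
    (x : Fin #(fib (p ∘ H) i)) :
    (((fib p i).orderIsoOfFin rfl) (hmap H p i x)).1
      = H (((fib (p ∘ H) i).orderIsoOfFin rfl) x).1 := by
  unfold hmap
  rw [OrderIso.apply_symm_apply]

lemma iota_val_inj {n : ℕ} {S : Finset (Fin n)} {a b : Fin #S}
    (h : ((S.orderIsoOfFin rfl) a).1 = ((S.orderIsoOfFin rfl) b).1) : a = b :=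
  (S.orderIsoOfFin rfl).injective (Subtype.ext h)

lemma iota_val_congr {n : ℕ} {S S' : Finset (Fin n)} (h : S = S') {a : Fin #S} {b : Fin #S'}
    (hab : (a : ℕ) = b) : ((S.orderIsoOfFin rfl) a).1 = ((S'.orderIsoOfFin rfl) b).1 := by
  subst h
  rw [Fin.ext hab]

lemma iota_symm_val_congr {n : ℕ} {S S' : Finset (Fin n)} (h : S = S') {a : Fin n}
    (ha : a ∈ S) (ha' : a ∈ S') :
    ((((S.orderIsoOfFin rfl).symm) ⟨a, ha⟩ : Fin #S) : ℕ)
      = (((S'.orderIsoOfFin rfl).symm) ⟨a, ha'⟩ : Fin #S') := by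
  subst h
  rfl

lemma fin_fun_heq {α : Sort*} {c₁ c₂ : ℕ} (h : c₁ = c₂) {f : α → Fin c₁} {g : α → Fin c₂}
    (hx : ∀ x, ((f x : ℕ)) = g x) : HEq f g := by
  subst h
  exact heq_of_eq (funext fun x => Fin.ext (hx x))

lemma pi_sigma_heq {k t : ℕ} {g g' : Fin k → Fin t} (hg : g = g')
    {F : ∀ i : Fin t, Σ s : ℕ, Fin #(fib g i) → Fin s}
    {F' : ∀ i : Fin t, Σ s : ℕ, Fin #(fib g' i) → Fin s}
    (h1 : ∀ i, (F i).1 = (F' i).1)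
    (h2 : ∀ (i : Fin t) (n : ℕ) (hn : n < #(fib g i)) (hn' : n < #(fib g' i)),
      (((F i).2 ⟨n, hn⟩ : Fin (F i).1) : ℕ) = ((F' i).2 ⟨n, hn'⟩ : Fin (F' i).1)) :
    HEq F F' := by
  subst hg
  apply heq_of_eq
  funext i
  exact Sigma.ext (h1 i) (fin_fun_heq (h1 i) (fun x => h2 i x.1 x.2 x.2))

/-- numeric extraction of the second component of a `chi`-type sigma element -/
def om {k t : ℕ} (z : Σ g : Fin k → Fin t, ∀ i : Fin t, Σ s : ℕ,
    (Fin #(fib g i) → Fin s)) (i : Fin t) (n : ℕ) : ℕ :=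
  if hn : n < #(fib z.1 i) then (((z.2 i).2 ⟨n, hn⟩ : Fin (z.2 i).1) : ℕ) else 0

lemma card_fib_cast {m M t : ℕ} (h : M = m) (p : Fin m → Fin t) (i : Fin t) :
    #(fib (p ∘ Fin.cast h) i) = #(fib p i) := by
  subst h
  have : (p ∘ Fin.cast rfl) = p := rfl
  rw [this]

noncomputable def Hrec {k t : ℕ} (g : Fin k → Fin t)
    (r : ∀ i : Fin t, Σ s : ℕ, (Fin #(fib g i) → Fin s))
    {M : ℕ} (q : Fin M → Fin t) (hq : ∀ i, #(fib q i) = (r i).1) (j : Fin k) : Fin M :=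
  ((fib q (g j)).orderIsoOfFin rfl)
    (Fin.cast (hq (g j)).symm
      ((r (g j)).2 (((fib g (g j)).orderIsoOfFin rfl).symm ⟨j, mem_fib.2 rfl⟩)))

lemma Hrec_maps {k t : ℕ} (g : Fin k → Fin t)
    (r : ∀ i : Fin t, Σ s : ℕ, (Fin #(fib g i) → Fin s))
    {M : ℕ} (q : Fin M → Fin t) (hq : ∀ i, #(fib q i) = (r i).1) (j : Fin k) :
    q (Hrec g r q hq j) = g j :=
  mem_fib.1 (Finset.coe_mem _)

lemma Hrec_comp {k t : ℕ} (g : Fin k → Fin t)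
    (r : ∀ i : Fin t, Σ s : ℕ, (Fin #(fib g i) → Fin s))
    {M : ℕ} (q : Fin M → Fin t) (hq : ∀ i, #(fib q i) = (r i).1) :
    q ∘ Hrec g r q hq = g := funext fun j => Hrec_maps g r q hq j

lemma Hrec_val_at {k t : ℕ} (g : Fin k → Fin t)
    (r : ∀ i : Fin t, Σ s : ℕ, (Fin #(fib g i) → Fin s))
    {M : ℕ} (q : Fin M → Fin t) (hq : ∀ i, #(fib q i) = (r i).1) (j : Fin k)
    {i : Fin t} (hgi : g j = i) :
    ((Hrec g r q hq j : Fin M) : ℕ)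
      = (((fib q i).orderIsoOfFin rfl)
          (Fin.cast (hq i).symm
            ((r i).2 (((fib g i).orderIsoOfFin rfl).symm ⟨j, mem_fib.2 hgi⟩)))).1 := by
  subst hgi
  rfl

lemma Hrec_surj {k t : ℕ} (g : Fin k → Fin t)
    (r : ∀ i : Fin t, Σ s : ℕ, (Fin #(fib g i) → Fin s))
    (hr : ∀ i, Surjective (r i).2)
    {M : ℕ} (q : Fin M → Fin t) (hq : ∀ i, #(fib q i) = (r i).1) :
    Surjective (Hrec g r q hq) := by
  intro j₀
  set i := q j₀ with hi
  have hj₀ : j₀ ∈ fib q i := mem_fib.2 rfl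
  set y : Fin (r i).1 := Fin.cast (hq i) (((fib q i).orderIsoOfFin rfl).symm ⟨j₀, hj₀⟩) with hy
  obtain ⟨x, hx⟩ := hr i y
  refine ⟨((fib g i).orderIsoOfFin rfl x).1, ?_⟩
  have hgi : g (((fib g i).orderIsoOfFin rfl x).1) = i := mem_fib.1 (Finset.coe_mem _)
  apply Fin.ext
  rw [Hrec_val_at g r q hq _ hgi]
  have hsymm : ((fib g i).orderIsoOfFin rfl).symm ⟨((fib g i).orderIsoOfFin rfl x).1,
      mem_fib.2 hgi⟩ = x := by
    apply ((fib g i).orderIsoOfFin rfl).symm_apply_eq.2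
    apply Subtype.ext
    rfl
  rw [hsymm, hx, hy]
  simp

lemma chi_Hrec {k t : ℕ} (g : Fin k → Fin t)
    (r : ∀ i : Fin t, Σ s : ℕ, (Fin #(fib g i) → Fin s))
    {M : ℕ} (q : Fin M → Fin t) (hq : ∀ i, #(fib q i) = (r i).1) :
    chi (⟨M, Hrec g r q hq, q⟩ : Σ m : ℕ, (Fin k → Fin m) × (Fin m → Fin t)) = ⟨g, r⟩ := by
  have hfst : q ∘ Hrec g r q hq = g := Hrec_comp g r q hq
  refine Sigma.ext hfst (pi_sigma_heq hfst (fun i => hq i) ?_)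
  intro i n hn hn'
  set H := Hrec g r q hq with hH
  set x : Fin #(fib (q ∘ H) i) := ⟨n, hn⟩ with hxdef
  set x' : Fin #(fib g i) := ⟨n, hn'⟩ with hx'def
  have hfib : fib (q ∘ H) i = fib g i := by rw [hfst]
  -- the underlying element of `Fin k`
  set j : Fin k := (((fib (q ∘ H) i).orderIsoOfFin rfl) x).1 with hj
  have hjval' : ((((fib g i).orderIsoOfFin rfl) x') : Fin k) = j := by
    rw [hj]
    exact iota_val_congr hfib.symm rfl
  have hgj : g j = i := by
    rw [← hjval']
    exact mem_fib.1 (Finset.coe_mem _)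
  -- compute ι (hmap H q i x) = H j
  have h1 : (((fib q i).orderIsoOfFin rfl) (hmap H q i x)).1 = (H j).1 := by
    rw [iota_hmap H q i x]
  -- compute H j via Hrec_val_at
  have hsymm : ((fib g i).orderIsoOfFin rfl).symm ⟨j, mem_fib.2 hgj⟩ = x' := by
    apply ((fib g i).orderIsoOfFin rfl).symm_apply_eq.2
    apply Subtype.ext
    exact hjval'.symm
  have h2 : ((H j : Fin M) : ℕ)
      = (((fib q i).orderIsoOfFin rfl)
          (Fin.cast (hq i).symm ((r i).2 x'))).1 := by
    rw [hH, Hrec_val_at g r q hq j hgj, hsymm]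
  have h3 : hmap H q i x = Fin.cast (hq i).symm ((r i).2 x') :=
    iota_val_inj (Fin.ext (h1.trans h2))
  show ((hmap H q i x : Fin #(fib q i)) : ℕ) = (((r i).2 x' : Fin (r i).1) : ℕ)
  rw [h3]
  simp

lemma fib_cast_eq {m M t : ℕ} (hM : M = m) (p : Fin m → Fin t) (i : Fin t) (j : Fin M) :
    (j ∈ fib (p ∘ Fin.cast hM) i) ↔ (Fin.cast hM j ∈ fib p i) := by
  rw [mem_fib, mem_fib]
  rfl

lemma Hrec_eq_H {k t m : ℕ} (H : Fin k → Fin m) (p : Fin m → Fin t)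
    {g : Fin k → Fin t} {r : ∀ i : Fin t, Σ s : ℕ, (Fin #(fib g i) → Fin s)}
    (hchi : chi (⟨m, H, p⟩ : Σ m : ℕ, (Fin k → Fin m) × (Fin m → Fin t)) = ⟨g, r⟩)
    {M : ℕ} (hM : M = m)
    (hq : ∀ i, #(fib (p ∘ Fin.cast hM) i) = (r i).1) (j : Fin k) :
    ((Hrec g r (p ∘ Fin.cast hM) hq j : Fin M) : ℕ) = ((H j : Fin m) : ℕ) := by
  subst hM
  have hfst : p ∘ H = g := congrArg Sigma.fst hchi
  have hpHj : (p ∘ H) j = g j := congrFun hfst j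
  have hfibeq : fib (p ∘ H) (g j) = fib g (g j) := by rw [hfst]
  -- the canonical preimage point
  have memj : j ∈ fib (p ∘ H) (g j) := mem_fib.2 hpHj
  set x : Fin #(fib (p ∘ H) (g j)) := ((fib (p ∘ H) (g j)).orderIsoOfFin rfl).symm ⟨j, memj⟩
    with hx
  set y : Fin #(fib g (g j)) := ((fib g (g j)).orderIsoOfFin rfl).symm ⟨j, mem_fib.2 rfl⟩
    with hy
  have hxy : (x : ℕ) = (y : ℕ) := iota_symm_val_congr hfibeq memj (mem_fib.2 rfl)
  -- relate hmap and r via om extraction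
  have hom : om (chi (⟨_, (H, p)⟩ : (m : ℕ) × ((Fin k → Fin m) × (Fin m → Fin t)))) (g j) (x : ℕ)
      = om (⟨g, r⟩ : Σ g : Fin k → Fin t, ∀ i : Fin t, Σ s : ℕ, (Fin #(fib g i) → Fin s))
        (g j) (x : ℕ) := by rw [hchi]
  rw [om, om] at hom
  have hlt1 : ((x : ℕ)) < #(fib ((chi (⟨_, (H, p)⟩ : (m : ℕ) × ((Fin k → Fin m) × (Fin m → Fin t)))).1) (g j)) := x.2
  have hlt2 : ((x : ℕ)) < #(fib g (g j)) := by rw [hxy]; exact y.2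
  rw [dif_pos hlt1, dif_pos hlt2] at hom
  -- hom : (hmap H p (g j) ⟨x, _⟩).1 = ((r (g j)).2 ⟨x, _⟩).1
  have hxeta : (⟨(x : ℕ), hlt1⟩ : Fin #(fib (p ∘ H) (g j))) = x := Fin.ext rfl
  have hyeta : (⟨(x : ℕ), hlt2⟩ : Fin #(fib g (g j))) = y := Fin.ext hxy
  rw [show (⟨(x : ℕ), hlt1⟩ : Fin #(fib ((chi (⟨_, (H, p)⟩ : (m : ℕ) × ((Fin k → Fin m) × (Fin m → Fin t)))).1) (g j))) = x from Fin.ext rfl, hyeta] at hom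
  -- hom : ((hmap H p (g j) x : Fin _) : ℕ) = ((r (g j)).2 y : ℕ)
  -- compute both sides as iota-values
  have h1 : (((fib p (g j)).orderIsoOfFin rfl) (hmap H p (g j) x)).1 = H j := by
    rw [iota_hmap H p (g j) x]
    congr 1
    rw [hx]
    exact congrArg Subtype.val
      (((fib (p ∘ H) (g j)).orderIsoOfFin rfl).apply_symm_apply ⟨j, memj⟩)
  -- now the goal
  have hfibq : fib (p ∘ Fin.cast rfl) (g j) = fib p (g j) := by
    ext j'
    rw [mem_fib, mem_fib]
    rfl
  rw [Hrec]
  have h2 : ((((fib (p ∘ Fin.cast rfl) (g j)).orderIsoOfFin rfl)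
      (Fin.cast (hq (g j)).symm ((r (g j)).2 y))).1 : ℕ)
      = ((((fib p (g j)).orderIsoOfFin rfl) (hmap H p (g j) x)).1 : ℕ) := by
    refine congrArg Fin.val (iota_val_congr hfibq ?_)
    rw [Fin.coe_cast]
    exact hom.symm
  calc ((((fib (p ∘ Fin.cast rfl) (g j)).orderIsoOfFin rfl)
        (Fin.cast (hq (g j)).symm ((r (g j)).2 y))).1 : ℕ)
      = ((((fib p (g j)).orderIsoOfFin rfl) (hmap H p (g j) x)).1 : ℕ) := h2
    _ = ((H j : _) : ℕ) := by rw [h1]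

lemma pair_heq {k t m M : ℕ} (hM : M = m) {H' : Fin k → Fin M} {p' : Fin M → Fin t}
    {H : Fin k → Fin m} {p : Fin m → Fin t}
    (h1 : ∀ j, ((H' j : Fin M) : ℕ) = ((H j : Fin m) : ℕ))
    (h2 : ∀ x : Fin M, p' x = p (Fin.cast hM x)) :
    HEq (H', p') (H, p) := by
  subst hM
  apply heq_of_eq
  have e1 : H' = H := funext fun j => Fin.ext (h1 j)
  have e2 : p' = p := funext fun x => h2 x
  rw [e1, e2]

lemma card_fiber {k t : ℕ} (ht : 1 ≤ t)
    (e : Σ g : Fin k → Fin t, ∀ i : Fin t, Σ s : ℕ, (Fin #(fib g i) → Fin s))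
    (he : e ∈ Et k t) :
    #((Dt k t).filter fun d => chi d = e)
      = #(univ.filter fun q : Fin (∑ i, (e.2 i).1) → Fin t =>
          ∀ i, #(fib q i) = (e.2 i).1) := by
  obtain ⟨g, r⟩ := e
  rw [Et, Finset.mem_sigma, mem_Surj, Fintype.mem_piFinset] at he
  obtain ⟨hg, hr⟩ := he
  have hr1 : ∀ i, 1 ≤ (r i).1 := by
    intro i
    have := hr i
    rw [Finset.mem_sigma, Finset.mem_Icc] at this
    exact this.1.1
  have hr2 : ∀ i, (r i).1 ≤ #(fib g i) := by
    intro i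
    have := hr i
    rw [Finset.mem_sigma, Finset.mem_Icc] at this
    exact this.1.2
  have hr3 : ∀ i, Surjective (r i).2 := by
    intro i
    have := hr i
    rw [Finset.mem_sigma, mem_Surj] at this
    exact this.2
  have hMk : (∑ i, (r i).1) ≤ k := by
    calc (∑ i, (r i).1) ≤ ∑ i, #(fib g i) := Finset.sum_le_sum fun i _ => hr2 i
      _ = k := (mSum g).symm
  have hM1 : 1 ≤ ∑ i, (r i).1 := by
    calc (1 : ℕ) ≤ t := ht
      _ = ∑ _i : Fin t, 1 := by simp
      _ ≤ ∑ i, (r i).1 := Finset.sum_le_sum fun i _ => hr1 i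
  have hMd : ∀ d ∈ (Dt k t).filter fun d => chi d =
      (⟨g, r⟩ : Σ g : Fin k → Fin t, ∀ i : Fin t, Σ s : ℕ, (Fin #(fib g i) → Fin s)),
      (∑ i, (r i).1) = d.1 := by
    intro d hd
    have hchi := (mem_filter.1 hd).2
    have hcard : ∀ i, #(fib d.2.2 i) = (r i).1 := fun i =>
      congrArg (fun z : Σ g : Fin k → Fin t, ∀ i : Fin t, Σ s : ℕ,
        (Fin #(fib g i) → Fin s) => (z.2 i).1) hchi
    rw [mSum d.2.2]
    exact (Finset.sum_congr rfl fun i _ => (hcard i).symm)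
  refine Finset.card_bij'
    (i := fun d hd => fun j : Fin (∑ i, (r i).1) => d.2.2 (Fin.cast (hMd d hd) j))
    (j := fun q hq => ⟨∑ i, (r i).1,
      Hrec g r q (fun i => (mem_filter.1 hq).2 i), q⟩) ?_ ?_ ?_ ?_
  · -- hi : image is in the q-set
    intro d hd
    rw [mem_filter]
    refine ⟨mem_univ _, fun i => ?_⟩
    show #(fib (d.2.2 ∘ Fin.cast (hMd d hd)) i) = (r i).1
    rw [card_fib_cast (hMd d hd) d.2.2 i]
    exact congrArg (fun z : Σ g : Fin k → Fin t, ∀ i : Fin t, Σ s : ℕ,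
      (Fin #(fib g i) → Fin s) => (z.2 i).1) (mem_filter.1 hd).2
  · -- hj : reconstruction is in the fiber
    intro q hq
    have hq' : ∀ i, #(fib q i) = (r i).1 := (mem_filter.1 hq).2
    rw [mem_filter]
    constructor
    · rw [Dt, Finset.mem_sigma, Finset.mem_product]
      refine ⟨Finset.mem_Icc.2 ⟨hM1, hMk⟩, ?_, ?_⟩
      · exact mem_Surj.2 (Hrec_surj g r hr3 q hq')
      · refine mem_Surj.2 fun i => ?_
        have : 0 < #(fib q i) := lt_of_lt_of_le (hr1 i) (le_of_eq (hq' i).symm)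
        obtain ⟨j, hj⟩ := Finset.card_pos.1 this
        exact ⟨j, mem_fib.1 hj⟩
    · exact chi_Hrec g r q hq'
  · -- left inverse
    intro d hd
    obtain ⟨m, H, p⟩ := d
    have hchi := (mem_filter.1 hd).2
    refine Sigma.ext (hMd ⟨m, (H, p)⟩ hd) ?_
    show HEq (_, _) (H, p)
    refine pair_heq (hMd ⟨m, (H, p)⟩ hd) (fun j => ?_) (fun x => rfl)
    exact Hrec_eq_H H p hchi (hMd ⟨m, (H, p)⟩ hd) _ j
  · -- right inverse
    intro q hq
    rfl

lemma key_step {k t : ℕ} (ht : 1 ≤ t) (A : Fam U Z) (B : Fam W U) (C : Fam V W)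
    (v : Fin k → V) :
    ∑ d ∈ Dt k t, ((d.1).factorial : ℚ)⁻¹ • A t (Th B C v d)
      = ∑ e ∈ Et k t, (∏ i, (((e.2 i).1).factorial : ℚ)⁻¹) • A t (La B C v e.1 e.2) := by
  rw [← Finset.sum_fiberwise_of_maps_to chi_maps_to
    (fun d => ((d.1).factorial : ℚ)⁻¹ • A t (Th B C v d))]
  refine Finset.sum_congr rfl fun e he => ?_
  have hterm : ∀ d ∈ (Dt k t).filter fun d => chi d = e,
      ((d.1).factorial : ℚ)⁻¹ • A t (Th B C v d)
        = (((∑ i, (e.2 i).1)).factorial : ℚ)⁻¹ • A t (La B C v e.1 e.2) := by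
    intro d hd
    have hchi := (mem_filter.1 hd).2
    have hcard : ∀ i, #(fib d.2.2 i) = (e.2 i).1 := fun i =>
      congrArg (fun z : Σ g : Fin k → Fin t, ∀ i : Fin t, Σ s : ℕ,
        (Fin #(fib g i) → Fin s) => (z.2 i).1) hchi
    have hM : d.1 = ∑ i, (e.2 i).1 := by
      rw [mSum d.2.2]
      exact Finset.sum_congr rfl fun i _ => hcard i
    have hTh : A t (Th B C v d) = A t (La B C v e.1 e.2) := by
      rw [Th_eq_La B C v d, hchi]
    rw [hM, hTh]
  rw [Finset.sum_congr rfl hterm, Finset.sum_const, card_fiber ht e he]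
  have hcnt := cnt t (∑ i, (e.2 i).1) (fun i => (e.2 i).1) rfl
  have hcntQ : ((#(univ.filter fun q : Fin (∑ i, (e.2 i).1) → Fin t =>
      ∀ i, #(fib q i) = (e.2 i).1) : ℕ) : ℚ) * ∏ i, (((e.2 i).1).factorial : ℚ)
      = (((∑ i, (e.2 i).1)).factorial : ℚ) := by
    rw [← Nat.cast_prod, ← Nat.cast_mul, hcnt]
  rw [← Nat.cast_smul_eq_nsmul ℚ, smul_smul]
  congr 1
  have hne : (∏ i, (((e.2 i).1).factorial : ℚ)) ≠ 0 := by
    apply Finset.prod_ne_zero_iff.2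
    intro i _
    exact_mod_cast Nat.factorial_ne_zero _
  have hne2 : ((((∑ i, (e.2 i).1)).factorial : ℚ)) ≠ 0 := by
    exact_mod_cast Nat.factorial_ne_zero _
  rw [Finset.prod_inv_distrib]
  field_simp
  linarith [hcntQ]

lemma Surj_empty {m t : ℕ} (h : m < t) : Surj m t = ∅ := by
  rw [Finset.eq_empty_iff_forall_notMem]
  intro f hf
  have := Fintype.card_le_of_surjective f (mem_Surj.1 hf)
  simp only [Fintype.card_fin] at this
  omega

lemma comp_assoc (A : Fam U Z) (B : Fam W U) (C : Fam V W)
    (hA : ∀ n : ℕ, ∃ F : MultilinearMap ℚ (fun _ : Fin n => U) Z, ∀ v, F v = A n v) :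
    Fam.comp A (Fam.comp B C) = Fam.comp (Fam.comp A B) C := by
  funext k v
  have hLHS : Fam.comp A (Fam.comp B C) k v
      = ∑ t ∈ Icc 1 k, ((t).factorial : ℚ)⁻¹ •
          ∑ e ∈ Et k t, (∏ i, (((e.2 i).1).factorial : ℚ)⁻¹) •
            A t (La B C v e.1 e.2) := by
    rw [comp_def]
    refine Finset.sum_congr rfl fun t ht => ?_
    congr 1
    rw [Et, Finset.sum_sigma]
    refine Finset.sum_congr rfl fun g hg => ?_
    obtain ⟨F, hF⟩ := hA t
    rw [← hF]
    have step1 : F (fun i => Fam.comp B C #(fib g i) (res v (fib g i)))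
        = F (fun i => ∑ x ∈ ((Icc 1 #(fib g i)).sigma fun s => Surj #(fib g i) s),
            ((x.1).factorial : ℚ)⁻¹ •
              B x.1 (fun y => C #(fib x.2 y) (res (res v (fib g i)) (fib x.2 y)))) := by
      congr 1
      funext i
      rw [comp_def, Finset.sum_sigma]
      exact Finset.sum_congr rfl fun s hs => Finset.smul_sum
    rw [step1, F.map_sum_finset]
    refine Finset.sum_congr rfl fun r hr => ?_
    rw [F.map_smul_univ (fun i => (((r i).1).factorial : ℚ)⁻¹)]
    congr 1
    exact hF _
  have hRHS : Fam.comp (Fam.comp A B) C k v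
      = ∑ t ∈ Icc 1 k, ((t).factorial : ℚ)⁻¹ •
          ∑ d ∈ Dt k t, ((d.1).factorial : ℚ)⁻¹ • A t (Th B C v d) := by
    rw [comp_def]
    have step1 : ∀ m ∈ Icc 1 k, ∀ H : Fin k → Fin m,
        Fam.comp A B m (fun j => C #(fib H j) (res v (fib H j)))
          = ∑ t ∈ Icc 1 k, ((t).factorial : ℚ)⁻¹ • ∑ p ∈ Surj m t,
              A t (Th B C v ⟨m, (H, p)⟩) := by
      intro m hm H
      rw [comp_def]
      refine Finset.sum_subset
        (Finset.Icc_subset_Icc_right (Finset.mem_Icc.1 hm).2) ?_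
      intro t htk htm
      have hmt : m < t := by
        rw [Finset.mem_Icc] at htk htm
        omega
      rw [Surj_empty hmt, Finset.sum_empty, smul_zero]
    calc
      ∑ m ∈ Icc 1 k, ((m).factorial : ℚ)⁻¹ •
          ∑ H ∈ Surj k m, Fam.comp A B m
            (fun j => C #(fib H j) (res v (fib H j)))
        = ∑ m ∈ Icc 1 k, ∑ H ∈ Surj k m, ∑ t ∈ Icc 1 k, ∑ p ∈ Surj m t,
            (((m).factorial : ℚ)⁻¹ * ((t).factorial : ℚ)⁻¹) •
              A t (Th B C v ⟨m, (H, p)⟩) := by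
          refine Finset.sum_congr rfl fun m hm => ?_
          rw [Finset.smul_sum]
          refine Finset.sum_congr rfl fun H hH => ?_
          rw [step1 m hm H, Finset.smul_sum]
          refine Finset.sum_congr rfl fun t ht => ?_
          rw [smul_smul, Finset.smul_sum]
      _ = ∑ m ∈ Icc 1 k, ∑ t ∈ Icc 1 k, ∑ H ∈ Surj k m, ∑ p ∈ Surj m t,
            (((m).factorial : ℚ)⁻¹ * ((t).factorial : ℚ)⁻¹) •
              A t (Th B C v ⟨m, (H, p)⟩) :=
          Finset.sum_congr rfl fun m _ => Finset.sum_comm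
      _ = ∑ t ∈ Icc 1 k, ∑ m ∈ Icc 1 k, ∑ H ∈ Surj k m, ∑ p ∈ Surj m t,
            (((m).factorial : ℚ)⁻¹ * ((t).factorial : ℚ)⁻¹) •
              A t (Th B C v ⟨m, (H, p)⟩) := Finset.sum_comm
      _ = ∑ t ∈ Icc 1 k, ((t).factorial : ℚ)⁻¹ •
            ∑ d ∈ Dt k t, ((d.1).factorial : ℚ)⁻¹ • A t (Th B C v d) := by
          refine Finset.sum_congr rfl fun t _ => ?_
          rw [Dt, Finset.sum_sigma, Finset.smul_sum]
          refine Finset.sum_congr rfl fun m _ => ?_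
          rw [Finset.sum_product, Finset.smul_sum]
          refine Finset.sum_congr rfl fun H _ => ?_
          rw [Finset.smul_sum]
          refine Finset.sum_congr rfl fun p _ => ?_
          rw [smul_smul, mul_comm]
  rw [hLHS, hRHS]
  refine Finset.sum_congr rfl fun t ht => ?_
  congr 1
  exact (key_step (Finset.mem_Icc.1 ht).1 A B C v).symm

lemma hom_coord_zero {Φ : Fam V W} (hΦ : IsLinfHom Φ) {c : ℕ} {x : Fin c → V}
    (i : Fin c) (hx : x i = 0) : Φ c x = 0 := by
  obtain ⟨F, hF⟩ := hΦ.multilinear c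
  rw [← hF]
  exact F.map_coord_zero i hx

lemma idFam_ne_one (V : Type*) [AddCommGroup V] {s : ℕ} (hs : s ≠ 1)
    (x : Fin s → V) : idFam V s x = 0 := by
  match s with
  | 0 => rfl
  | 1 => exact absurd rfl hs
  | (n+2) => rfl

lemma orderIso_univ' {k : ℕ} (t : Fin (#(univ : Finset (Fin k)))) :
    (((univ : Finset (Fin k)).orderIsoOfFin rfl) t).1 = Fin.cast (Finset.card_fin k) t := by
  have h1 : (fun t : Fin (#(univ : Finset (Fin k))) => Fin.cast (Finset.card_fin k) t) =
      ⇑((univ : Finset (Fin k)).orderEmbOfFin rfl) :=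
    Finset.orderEmbOfFin_unique rfl (fun x => mem_univ _) (fun a b hab => hab)
  have := congrFun h1 t
  rw [← Finset.coe_orderIsoOfFin_apply] at this
  exact this.symm

lemma res_univ {T : Type*} {k : ℕ} (v : Fin k → T) (t : Fin (#(univ : Finset (Fin k)))) :
    res v univ t = v (Fin.cast (Finset.card_fin k) t) := by
  unfold res
  rw [orderIso_univ']

lemma res_singleton {T : Type*} {k : ℕ} (w : Fin k → T) (S : Finset (Fin k)) (a : Fin k)
    (hS : S = {a}) (x : Fin S.card) : res w S x = w a := by
  subst hS
  have hmem := ((({a} : Finset (Fin k)).orderIsoOfFin rfl) x).2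
  rw [Finset.mem_singleton] at hmem
  unfold res
  rw [hmem]

lemma Surj_one {k : ℕ} (hk : 1 ≤ k) : Surj k 1 = {fun _ => (0 : Fin 1)} := by
  ext f
  rw [mem_Surj, Finset.mem_singleton]
  constructor
  · intro _
    funext j
    exact Subsingleton.elim _ _
  · rintro rfl
    intro y
    exact ⟨⟨0, hk⟩, Subsingleton.elim _ _⟩

lemma fib_const_univ {k : ℕ} (i : Fin 1) :
    fib (fun _ : Fin k => (0 : Fin 1)) i = univ := by
  ext j
  rw [mem_fib]
  simp [Subsingleton.elim (0 : Fin 1) i]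

lemma comp_zero {Ψ : Fam W U} {Φ : Fam V W} (v : Fin 0 → V) :
    Fam.comp Ψ Φ 0 v = 0 := by
  rw [comp_def]
  simp

/-- left composition with the identity family -/
lemma comp_id_left {Ψ : Fam W V} (hΨ : IsLinfHom Ψ) :
    Fam.comp (idFam V) Ψ = Ψ := by
  funext k w
  rcases Nat.eq_zero_or_pos k with hk | hk
  · subst hk
    rw [comp_zero w]
    exact (hΨ.zero w).symm
  · rw [comp_def]
    rw [Finset.sum_eq_single 1]
    · rw [Surj_one hk, Finset.sum_singleton]
      have harg : (fun i : Fin 1 => Ψ #(fib (fun _ : Fin k => (0 : Fin 1)) i)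
          (res w (fib (fun _ : Fin k => (0 : Fin 1)) i))) = fun _ : Fin 1 => Ψ k w := by
        funext i
        have hfib := fib_const_univ (k := k) i
        have : Ψ #(fib (fun _ : Fin k => (0 : Fin 1)) i)
            (res w (fib (fun _ : Fin k => (0 : Fin 1)) i)) = Ψ #(univ : Finset (Fin k))
            (res w univ) := by rw [hfib]
        rw [this]
        exact fam_congr Ψ (Finset.card_fin k) (fun x => res_univ w x)
      rw [harg]
      show ((1).factorial : ℚ)⁻¹ • idFam V 1 (fun _ => Ψ k w) = Ψ k w
      simp [idFam]
    · intro s hs hs1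
      have : ∀ h ∈ Surj k s, idFam V s
          (fun i => Ψ #(fib h i) (res w (fib h i))) = 0 := fun h _ =>
        idFam_ne_one V hs1 _
      rw [Finset.sum_congr rfl this, Finset.sum_const, smul_zero, smul_zero]
    · intro h1
      exact absurd (Finset.mem_Icc.2 ⟨le_refl 1, hk⟩) h1

lemma comp_one {Ψ : Fam W U} {Φ : Fam V W} (w : Fin 1 → V) :
    Fam.comp Ψ Φ 1 w = Ψ 1 (fun _ => Φ 1 (fun _ => w 0)) := by
  rw [comp_def]
  rw [show Icc 1 1 = {1} from rfl, Finset.sum_singleton, Surj_one (le_refl 1),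
    Finset.sum_singleton]
  have harg : (fun i : Fin 1 => Φ #(fib (fun _ : Fin 1 => (0 : Fin 1)) i)
      (res w (fib (fun _ : Fin 1 => (0 : Fin 1)) i))) = fun _ : Fin 1 => Φ 1 (fun _ => w 0) := by
    funext i
    have hfib := fib_const_univ (k := 1) i
    have h2 : Φ #(fib (fun _ : Fin 1 => (0 : Fin 1)) i)
        (res w (fib (fun _ : Fin 1 => (0 : Fin 1)) i)) = Φ #(univ : Finset (Fin 1))
        (res w univ) := by rw [hfib]
    rw [h2]
    refine fam_congr Φ (Finset.card_fin 1) (fun x => ?_)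
    rw [res_univ w x]
    congr 1
    exact Subsingleton.elim _ _
  rw [harg]
  simp

lemma card_surj_self (k : ℕ) : #(Surj k k) = k.factorial := by
  have h1 : #(Surj k k) = Fintype.card (Equiv.Perm (Fin k)) := by
    rw [← Finset.card_univ]
    refine Finset.card_bij (fun g hg => Equiv.ofBijective g
      ⟨Finite.injective_iff_surjective.2 (mem_Surj.1 hg), mem_Surj.1 hg⟩)
      (fun g hg => mem_univ _) ?_ ?_
    · intro g hg g' hg' heq
      exact congrArg (fun e : Equiv.Perm (Fin k) => ⇑e) heq
    · intro σ _
      refine ⟨⇑σ, mem_Surj.2 σ.surjective, ?_⟩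
      ext x
      rfl
  rw [h1, Fintype.card_perm, Fintype.card_fin]

end StmtAux

/-- If `Φ : V → W` and `Ψ : W → V` are `L∞` homomorphisms of evenly graded `L∞`
algebras over `ℚ` with `Ψ ∘ Φ = id_V` and `Φ^1` surjective, then `Φ ∘ Ψ = id_W`. -/
theorem stmt_15 {V W : Type*} [AddCommGroup V] [Module ℚ V]
    [AddCommGroup W] [Module ℚ W]
    (Φ : Fam V W) (hΦ : IsLinfHom Φ) (Ψ : Fam W V) (hΨ : IsLinfHom Ψ)
    (h : Fam.comp Ψ Φ = idFam V)
    (hsurj : Function.Surjective fun x : V => Φ 1 fun _ => x) :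
    Fam.comp Φ Ψ = idFam W := by
  open StmtAux Finset Function in
  have hcomp : Fam.comp Ψ (Fam.comp Φ Ψ) = Ψ := by
    rw [StmtAux.comp_assoc Ψ Φ Ψ hΨ.multilinear, h, StmtAux.comp_id_left hΨ]
  have h1 : ∀ x : V, Ψ 1 (fun _ => Φ 1 fun _ => x) = x := by
    intro x
    have h2 := congrFun (congrFun h 1) (fun _ => x)
    rw [StmtAux.comp_one] at h2
    exact h2
  have hΨinj : ∀ y y' : W, Ψ 1 (fun _ => y) = Ψ 1 (fun _ => y') → y = y' := by
    intro y y' hy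
    obtain ⟨x, hx⟩ := hsurj y
    obtain ⟨x', hx'⟩ := hsurj y'
    dsimp at hx hx'
    rw [← hx, ← hx'] at hy ⊢
    rw [h1 x, h1 x'] at hy
    rw [hy]
  have hX1 : ∀ w₀ : W, Fam.comp Φ Ψ 1 (fun _ => w₀) = w₀ := by
    intro w₀
    obtain ⟨x, hx⟩ := hsurj w₀
    dsimp at hx
    rw [StmtAux.comp_one]
    show Φ 1 (fun _ => Ψ 1 fun _ => w₀) = w₀
    rw [← hx, h1 x]
  suffices hXk : ∀ k, Fam.comp Φ Ψ k = idFam W k by funext k w; rw [hXk k]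
  intro k
  induction k using Nat.strong_induction_on with
  | _ k IH =>
  rcases k with _ | k'
  · funext w
    exact StmtAux.comp_zero w
  rcases k' with _ | n
  · funext w
    show Fam.comp Φ Ψ 1 w = idFam W 1 w
    have hw0 : ∀ i : Fin 1, w i = w 0 := fun i => by rw [Subsingleton.elim i 0]
    have hw : w = fun _ : Fin 1 => w 0 := funext fun i => hw0 i
    show Fam.comp Φ Ψ 1 w = w 0
    rw [hw, hX1]
  · funext w
    have hk2 : 2 ≤ n + 2 := by omega
    have hkeq := congrFun (congrFun hcomp (n + 2)) w
    rw [StmtAux.comp_def] at hkeq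
    have hmid : ∀ t ∈ Finset.Icc 1 (n + 2), t ∉ ({1, n + 2} : Finset ℕ) →
        ((t).factorial : ℚ)⁻¹ • ∑ g ∈ StmtAux.Surj (n + 2) t,
          Ψ t (fun i => Fam.comp Φ Ψ #(StmtAux.fib g i) (StmtAux.res w (StmtAux.fib g i)))
          = 0 := by
      intro t ht hnot
      rw [Finset.mem_Icc] at ht
      simp only [Finset.mem_insert, Finset.mem_singleton, not_or] at hnot
      have ht2 : 2 ≤ t := by omega
      have htk : t < n + 2 := by omega
      have hinner : ∀ g ∈ StmtAux.Surj (n + 2) t,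
          Ψ t (fun i => Fam.comp Φ Ψ #(StmtAux.fib g i) (StmtAux.res w (StmtAux.fib g i)))
            = 0 := by
        intro g hg
        have hgsurj := StmtAux.mem_Surj.1 hg
        have hge1 : ∀ i, 1 ≤ #(StmtAux.fib g i) := by
          intro i
          rw [Nat.succ_le_iff, Finset.card_pos]
          obtain ⟨j, hj⟩ := hgsurj i
          exact ⟨j, StmtAux.mem_fib.2 hj⟩
        have hsum : ∑ i, #(StmtAux.fib g i) = n + 2 := (StmtAux.mSum g).symm
        have hex : ∃ i, 2 ≤ #(StmtAux.fib g i) := by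
          by_contra hno
          push_neg at hno
          have hall : ∀ i, #(StmtAux.fib g i) = 1 := fun i =>
            le_antisymm (by have := hno i; omega) (hge1 i)
          have : ∑ i : Fin t, #(StmtAux.fib g i) = t := by
            rw [Finset.sum_congr rfl fun i _ => hall i]
            simp
          omega
        obtain ⟨i₀, hi₀⟩ := hex
        have hlt : #(StmtAux.fib g i₀) < n + 2 := by
          have hsplit : #(StmtAux.fib g i₀) +
              ∑ i ∈ Finset.univ.erase i₀, #(StmtAux.fib g i)
              = ∑ i, #(StmtAux.fib g i) :=
            Finset.add_sum_erase Finset.univ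
              (fun i => #(StmtAux.fib g i)) (Finset.mem_univ i₀)
          have hrest : (t - 1 : ℕ) ≤ ∑ i ∈ Finset.univ.erase i₀, #(StmtAux.fib g i) := by
            calc (t - 1 : ℕ) = #(Finset.univ.erase i₀) := by
                  rw [Finset.card_erase_of_mem (Finset.mem_univ i₀)]
                  simp
              _ = ∑ _i ∈ Finset.univ.erase i₀, 1 := by simp
              _ ≤ ∑ i ∈ Finset.univ.erase i₀, #(StmtAux.fib g i) :=
                  Finset.sum_le_sum fun i _ => hge1 i
          omega
        refine StmtAux.hom_coord_zero hΨ i₀ ?_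
        show Fam.comp Φ Ψ #(StmtAux.fib g i₀) (StmtAux.res w (StmtAux.fib g i₀)) = 0
        rw [IH #(StmtAux.fib g i₀) hlt]
        exact StmtAux.idFam_ne_one W (by omega) _
      rw [Finset.sum_congr rfl hinner, Finset.sum_const, smul_zero, smul_zero]
    have hsub : ({1, n + 2} : Finset ℕ) ⊆ Finset.Icc 1 (n + 2) := by
      intro x hx
      simp only [Finset.mem_insert, Finset.mem_singleton] at hx
      rcases hx with rfl | rfl <;> simp [Finset.mem_Icc] <;> omega
    rw [← Finset.sum_subset hsub hmid, Finset.sum_pair (show (1 : ℕ) ≠ n + 2 by omega)]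
      at hkeq
    -- compute the t = 1 term
    have hf1 : ((1 : ℕ).factorial : ℚ)⁻¹ • ∑ g ∈ StmtAux.Surj (n + 2) 1,
        Ψ 1 (fun i => Fam.comp Φ Ψ #(StmtAux.fib g i) (StmtAux.res w (StmtAux.fib g i)))
        = Ψ 1 (fun _ => Fam.comp Φ Ψ (n + 2) w) := by
      rw [StmtAux.Surj_one (by omega), Finset.sum_singleton]
      have harg : (fun i : Fin 1 => Fam.comp Φ Ψ
          #(StmtAux.fib (fun _ : Fin (n + 2) => (0 : Fin 1)) i)
          (StmtAux.res w (StmtAux.fib (fun _ : Fin (n + 2) => (0 : Fin 1)) i)))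
          = fun _ : Fin 1 => Fam.comp Φ Ψ (n + 2) w := by
        funext i
        have hfib := StmtAux.fib_const_univ (k := n + 2) i
        have hstep : Fam.comp Φ Ψ #(StmtAux.fib (fun _ : Fin (n + 2) => (0 : Fin 1)) i)
            (StmtAux.res w (StmtAux.fib (fun _ : Fin (n + 2) => (0 : Fin 1)) i))
            = Fam.comp Φ Ψ #(Finset.univ : Finset (Fin (n + 2)))
              (StmtAux.res w Finset.univ) := by rw [hfib]
        rw [hstep]
        exact StmtAux.fam_congr (Fam.comp Φ Ψ) (Finset.card_fin (n + 2))
          (fun x => StmtAux.res_univ w x)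
      rw [harg]
      simp
    -- compute the t = n + 2 term
    have hfK : (((n + 2) : ℕ).factorial : ℚ)⁻¹ • ∑ g ∈ StmtAux.Surj (n + 2) (n + 2),
        Ψ (n + 2) (fun i => Fam.comp Φ Ψ #(StmtAux.fib g i)
          (StmtAux.res w (StmtAux.fib g i)))
        = Ψ (n + 2) w := by
      have hterm : ∀ g ∈ StmtAux.Surj (n + 2) (n + 2),
          Ψ (n + 2) (fun i => Fam.comp Φ Ψ #(StmtAux.fib g i)
            (StmtAux.res w (StmtAux.fib g i))) = Ψ (n + 2) w := by
        intro g hg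
        have hbij : Function.Bijective g :=
          ⟨Finite.injective_iff_surjective.2 (StmtAux.mem_Surj.1 hg),
            StmtAux.mem_Surj.1 hg⟩
        set σ := Equiv.ofBijective g hbij with hσ
        have hfib : ∀ i, StmtAux.fib g i = {σ.symm i} := by
          intro i
          ext j
          rw [StmtAux.mem_fib, Finset.mem_singleton]
          constructor
          · intro hj
            have hj' : σ j = i := hj
            rw [← hj', Equiv.symm_apply_apply]
          · rintro rfl
            exact σ.apply_symm_apply i
        have harg : (fun i => Fam.comp Φ Ψ #(StmtAux.fib g i)
            (StmtAux.res w (StmtAux.fib g i))) = w ∘ σ.symm := by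
          funext i
          have h3 : Fam.comp Φ Ψ #(StmtAux.fib g i) (StmtAux.res w (StmtAux.fib g i))
              = Fam.comp Φ Ψ 1 (fun _ => w (σ.symm i)) := by
            refine StmtAux.fam_congr (Fam.comp Φ Ψ) ?_ ?_
            · rw [hfib i]
              exact Finset.card_singleton _
            · intro x
              exact StmtAux.res_singleton w _ _ (hfib i) x
          rw [h3, hX1]
          rfl
        rw [harg, hΨ.symm (n + 2) σ.symm w]
      rw [Finset.sum_congr rfl hterm, Finset.sum_const, StmtAux.card_surj_self,
        ← Nat.cast_smul_eq_nsmul ℚ, smul_smul,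
        inv_mul_cancel₀ (by exact_mod_cast Nat.factorial_ne_zero (n + 2)), one_smul]
    rw [hf1, hfK] at hkeq
    have hzero : Ψ 1 (fun _ => Fam.comp Φ Ψ (n + 2) w) = Ψ 1 (fun _ => (0 : W)) := by
      have : Ψ 1 (fun _ => Fam.comp Φ Ψ (n + 2) w) = 0 := by
        have h' : Ψ 1 (fun _ => Fam.comp Φ Ψ (n + 2) w) + Ψ (n + 2) w
            = 0 + Ψ (n + 2) w := by rw [zero_add]; exact hkeq
        exact add_right_cancel h'
      rw [this, StmtAux.hom_coord_zero hΨ 0 rfl]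
    have hfin : Fam.comp Φ Ψ (n + 2) w = 0 := hΨinj _ _ hzero
    show Fam.comp Φ Ψ (n + 2) w = idFam W (n + 2) w
    rw [hfin]
    rfl
end
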